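/- arXiv:1501.05151 — 3 statements merged into one kernel-verified Lean document; each statement's English description precedes it below -/
import Mathlib

section
/- Let μ₁, μ₂ ∈ ℝ and σ₁, σ₂ > 0, and for j, k ∈ ℤ define μ(j,k) = ((μ₁ + 2πj) σ₂² + (μ₂ + 2πk) σ₁²)/(σ₁² + σ₂²), σ̄ = √(σ₁² σ₂² / (σ₁² + σ₂²)), and w(j,k) = exp(−((μ₁ + 2πj) − (μ₂ + 2πk))² / (2(σ₁² + σ₂²))) / √(2π(σ₁² + σ₂²)). Then the first circular moment of the renormalized product of the two wrapped normal densities satisfies (∫_0^{2π} exp(i x) f_WN(x; μ₁, σ₁) f_WN(x; μ₂, σ₂) dx) / (∫_0^{2π} f_WN(x; μ₁, σ₁) f_WN(x; μ₂, σ₂) dx) = (∑_{j,k ∈ ℤ} w(j,k) ∫_0^{2π} exp(i x) N(x; μ(j,k), σ̄) dx) / (∑_{j,k ∈ ℤ} w(j,k) ∫_0^{2π} N(x; μ(j,k), σ̄) dx). -/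
open MeasureTheory

/-- Wrapped normal density with location `μ` and concentration `σ`. -/
noncomputable def wnDensity (μ σ x : ℝ) : ℝ :=
  (1 / (Real.sqrt (2 * Real.pi) * σ)) *
    ∑' k : ℤ, Real.exp (-(x - μ + 2 * Real.pi * (k : ℝ)) ^ 2 / (2 * σ ^ 2))

/-- One-dimensional Gaussian density with mean `μ` and standard deviation `σ`. -/
noncomputable def gaussDensity (μ σ x : ℝ) : ℝ :=
  (1 / (Real.sqrt (2 * Real.pi) * σ)) * Real.exp (-(x - μ) ^ 2 / (2 * σ ^ 2))

/-!
Writing each wrapped normal density as the series of its Gaussian translates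
`N(x; μ + 2πj, σ)`, the product of the two densities becomes a double series of products of
Gaussians, and completing the square turns `N(x; a, σ₁) N(x; b, σ₂)` into
`w · N(x; μ(j,k), σ̄)`. On a bounded interval the translates are dominated by the theta-type series
`exp (-π (T j² - 2 S |j|))`, so by dominated convergence the integral against any bounded weight
(here `exp (i x)` and `1`) may be taken term by term.
-/

open Real

lemma gaussDensity_nonneg (μ : ℝ) {σ : ℝ} (hσ : 0 ≤ σ) (x : ℝ) : 0 ≤ gaussDensity μ σ x := by
  unfold gaussDensity
  positivity

@[fun_prop]
lemma continuous_gaussDensity (μ σ : ℝ) : Continuous (gaussDensity μ σ) := by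
  unfold gaussDensity
  fun_prop

lemma exists_summable_gaussDensity_majorant (μ : ℝ) {σ : ℝ} (hσ : 0 < σ) (S : ℝ) :
    ∃ b : ℤ → ℝ, 0 ≤ b ∧ Summable b ∧
      ∀ (j : ℤ) (x : ℝ), |x - μ| ≤ S → gaussDensity (μ + 2 * π * j) σ x ≤ b j := by
  refine ⟨fun j => 1 / (√(2 * π) * σ) *
      rexp (-π * (2 * π / σ ^ 2 * j ^ 2 - 2 * (S / σ ^ 2) * |(j : ℝ)|)),
    fun j => by positivity, ?_, fun j x hx => ?_⟩
  · simpa using (summable_pow_mul_jacobiTheta₂_term_bound (S / σ ^ 2)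
      (by positivity : 0 < 2 * π / σ ^ 2) 0).mul_left (1 / (√(2 * π) * σ))
  · refine mul_le_mul_of_nonneg_left (exp_le_exp.2 ?_) (by positivity)
    have hjx : (j : ℝ) * (x - μ) ≤ |(j : ℝ)| * S :=
      (le_abs_self _).trans (abs_mul (j : ℝ) (x - μ) ▸ by gcongr)
    rw [div_le_iff₀ (by positivity)]
    field_simp
    nlinarith [sq_nonneg (x - μ), pi_pos]

lemma hasSum_gaussDensity_wnDensity (μ : ℝ) {σ : ℝ} (hσ : 0 < σ) (x : ℝ) :
    HasSum (fun j : ℤ => gaussDensity (μ + 2 * π * j) σ x) (wnDensity μ σ x) := by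
  obtain ⟨b, -, hb, hle⟩ := exists_summable_gaussDensity_majorant μ hσ |x - μ|
  have hs : Summable fun j : ℤ => gaussDensity (μ + 2 * π * j) σ x :=
    hb.of_nonneg_of_le (fun j => gaussDensity_nonneg _ hσ.le x) (hle · x le_rfl)
  suffices wnDensity μ σ x = ∑' j : ℤ, gaussDensity (μ + 2 * π * j) σ x from this ▸ hs.hasSum
  unfold wnDensity gaussDensity
  rw [tsum_mul_left, ← (Equiv.neg ℤ).tsum_eq]
  congr 2 with j
  simp only [Equiv.neg_apply, Int.cast_neg]
  ring_nf

lemma hasSum_gaussDensity_mul_gaussDensity {σ₁ σ₂ : ℝ} (hσ₁ : 0 < σ₁) (hσ₂ : 0 < σ₂)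
    (μ₁ μ₂ x : ℝ) :
    HasSum (fun p : ℤ × ℤ =>
        gaussDensity (μ₁ + 2 * π * p.1) σ₁ x * gaussDensity (μ₂ + 2 * π * p.2) σ₂ x)
      (wnDensity μ₁ σ₁ x * wnDensity μ₂ σ₂ x) := by
  have h₁ := hasSum_gaussDensity_wnDensity μ₁ hσ₁ x
  have h₂ := hasSum_gaussDensity_wnDensity μ₂ hσ₂ x
  exact h₁.mul h₂ <| h₁.summable.mul_of_nonneg h₂.summable
    (fun _ => gaussDensity_nonneg _ hσ₁.le x) (fun _ => gaussDensity_nonneg _ hσ₂.le x)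

lemma hasSum_intervalIntegral_mul_wnDensity_mul_wnDensity {σ₁ σ₂ C : ℝ} (hσ₁ : 0 < σ₁)
    (hσ₂ : 0 < σ₂) (μ₁ μ₂ a b : ℝ) {φ : ℝ → ℂ}
    (hφm : AEStronglyMeasurable φ (volume.restrict (Set.uIoc a b)))
    (hφ : ∀ x, ‖φ x‖ ≤ C) :
    HasSum (fun p : ℤ × ℤ => ∫ x in a..b, φ x *
        ((gaussDensity (μ₁ + 2 * π * p.1) σ₁ x * gaussDensity (μ₂ + 2 * π * p.2) σ₂ x : ℝ) : ℂ))
      (∫ x in a..b, φ x * ((wnDensity μ₁ σ₁ x * wnDensity μ₂ σ₂ x : ℝ) : ℂ)) := by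
  obtain ⟨b₁, hb₁0, hb₁, hle₁⟩ := exists_summable_gaussDensity_majorant μ₁ hσ₁ (|a| + |b| + |μ₁|)
  obtain ⟨b₂, hb₂0, hb₂, hle₂⟩ := exists_summable_gaussDensity_majorant μ₂ hσ₂ (|a| + |b| + |μ₂|)
  have hC : 0 ≤ C := (norm_nonneg _).trans (hφ 0)
  have hclose : ∀ {x : ℝ} (μ : ℝ), x ∈ Set.uIoc a b → |x - μ| ≤ |a| + |b| + |μ| := by
    intro x μ hx
    have hxR : x ∈ Set.Icc (-(|a| + |b|)) (|a| + |b|) := Set.uIcc_subset_Icc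
      ⟨by linarith [neg_abs_le a, abs_nonneg b], by linarith [le_abs_self a, abs_nonneg b]⟩
      ⟨by linarith [neg_abs_le b, abs_nonneg a], by linarith [le_abs_self b, abs_nonneg a]⟩
      (Set.uIoc_subset_uIcc hx)
    linarith [abs_sub x μ, abs_le.2 hxR]
  refine intervalIntegral.hasSum_integral_of_dominated_convergence
    (fun p _ => C * (b₁ p.1 * b₂ p.2)) (fun p => hφm.mul ?_) (fun p => ?_) ?_
    intervalIntegrable_const ?_
  · fun_prop
  · refine Filter.Eventually.of_forall fun x hx => ?_
    have hg := mul_nonneg (gaussDensity_nonneg (μ₁ + 2 * π * p.1) hσ₁.le x)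
      (gaussDensity_nonneg (μ₂ + 2 * π * p.2) hσ₂.le x)
    rw [norm_mul, Complex.norm_real, Real.norm_of_nonneg hg]
    exact mul_le_mul (hφ x) (mul_le_mul (hle₁ _ x (hclose μ₁ hx)) (hle₂ _ x (hclose μ₂ hx))
      (gaussDensity_nonneg _ hσ₂.le x) (hb₁0 _)) hg hC
  · exact Filter.Eventually.of_forall fun _ _ =>
      (hb₁.mul_of_nonneg hb₂ hb₁0 hb₂0).mul_left C
  · refine Filter.Eventually.of_forall fun x _ => ?_
    exact (Complex.hasSum_ofReal.2 (hasSum_gaussDensity_mul_gaussDensity hσ₁ hσ₂ μ₁ μ₂ x)).mul_left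
      (φ x)

lemma gaussDensity_mul_gaussDensity {σ₁ σ₂ : ℝ} (hσ₁ : 0 < σ₁) (hσ₂ : 0 < σ₂) (a b x : ℝ) :
    gaussDensity a σ₁ x * gaussDensity b σ₂ x =
      rexp (-(a - b) ^ 2 / (2 * (σ₁ ^ 2 + σ₂ ^ 2))) / √(2 * π * (σ₁ ^ 2 + σ₂ ^ 2)) *
        gaussDensity ((a * σ₂ ^ 2 + b * σ₁ ^ 2) / (σ₁ ^ 2 + σ₂ ^ 2))
          √(σ₁ ^ 2 * σ₂ ^ 2 / (σ₁ ^ 2 + σ₂ ^ 2)) x := by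
  set s := σ₁ ^ 2 + σ₂ ^ 2
  have hs : 0 < s := by positivity
  have hsq : √s ^ 2 = s := sq_sqrt hs.le
  have hσ : √(σ₁ ^ 2 * σ₂ ^ 2 / s) = σ₁ * σ₂ / √s := by
    rw [← mul_pow, sqrt_div' _ hs.le, sqrt_sq (by positivity)]
  have complete_square : -(x - a) ^ 2 / (2 * σ₁ ^ 2) + -(x - b) ^ 2 / (2 * σ₂ ^ 2) =
      -(a - b) ^ 2 / (2 * s) + -(x - (a * σ₂ ^ 2 + b * σ₁ ^ 2) / s) ^ 2 / (2 * (σ₁ * σ₂ / √s) ^ 2) := by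
    field_simp
    rw [hsq]
    ring
  unfold gaussDensity
  rw [hσ, sqrt_mul' _ hs.le]
  calc _ = 1 / (√(2 * π) * σ₁) * (1 / (√(2 * π) * σ₂)) *
        rexp (-(x - a) ^ 2 / (2 * σ₁ ^ 2) + -(x - b) ^ 2 / (2 * σ₂ ^ 2)) := by
        rw [exp_add]; ring
    _ = _ := by
        rw [complete_square, exp_add]
        field_simp

/-- First circular moment of the renormalized product of two wrapped normal densities. -/
theorem wn_product_first_moment (μ₁ μ₂ σ₁ σ₂ : ℝ) (hσ₁ : 0 < σ₁) (hσ₂ : 0 < σ₂)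
    (μjk : ℤ → ℤ → ℝ) (σbar : ℝ) (w : ℤ → ℤ → ℝ)
    (hμjk : ∀ j k : ℤ, μjk j k =
      ((μ₁ + 2 * Real.pi * (j : ℝ)) * σ₂ ^ 2 + (μ₂ + 2 * Real.pi * (k : ℝ)) * σ₁ ^ 2) /
        (σ₁ ^ 2 + σ₂ ^ 2))
    (hσbar : σbar = Real.sqrt (σ₁ ^ 2 * σ₂ ^ 2 / (σ₁ ^ 2 + σ₂ ^ 2)))
    (hw : ∀ j k : ℤ, w j k =
      Real.exp (-((μ₁ + 2 * Real.pi * (j : ℝ)) - (μ₂ + 2 * Real.pi * (k : ℝ))) ^ 2 /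
          (2 * (σ₁ ^ 2 + σ₂ ^ 2))) / Real.sqrt (2 * Real.pi * (σ₁ ^ 2 + σ₂ ^ 2))) :
    (∫ x in (0 : ℝ)..(2 * Real.pi),
        Complex.exp (Complex.I * (x : ℂ)) * ((wnDensity μ₁ σ₁ x * wnDensity μ₂ σ₂ x : ℝ) : ℂ)) /
      ((∫ x in (0 : ℝ)..(2 * Real.pi), wnDensity μ₁ σ₁ x * wnDensity μ₂ σ₂ x : ℝ) : ℂ) =
    (∑' p : ℤ × ℤ, (w p.1 p.2 : ℂ) *
        ∫ x in (0 : ℝ)..(2 * Real.pi),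
          Complex.exp (Complex.I * (x : ℂ)) * ((gaussDensity (μjk p.1 p.2) σbar x : ℝ) : ℂ)) /
      ((∑' p : ℤ × ℤ, w p.1 p.2 *
          ∫ x in (0 : ℝ)..(2 * Real.pi), gaussDensity (μjk p.1 p.2) σbar x : ℝ) : ℂ) := by
  have expand : ∀ φ : ℝ → ℂ, Continuous φ → (∀ x, ‖φ x‖ ≤ 1) →
      ∫ x in (0 : ℝ)..(2 * π), φ x * ((wnDensity μ₁ σ₁ x * wnDensity μ₂ σ₂ x : ℝ) : ℂ) =
        ∑' p : ℤ × ℤ, (w p.1 p.2 : ℂ) *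
          ∫ x in (0 : ℝ)..(2 * π), φ x * ((gaussDensity (μjk p.1 p.2) σbar x : ℝ) : ℂ) := by
    intro φ hφc hφ
    rw [← (hasSum_intervalIntegral_mul_wnDensity_mul_wnDensity hσ₁ hσ₂ μ₁ μ₂ 0 (2 * π)
      hφc.aestronglyMeasurable hφ).tsum_eq]
    refine tsum_congr fun p => ?_
    simp_rw [gaussDensity_mul_gaussDensity hσ₁ hσ₂, ← hw, ← hμjk, ← hσbar, Complex.ofReal_mul,
      mul_left_comm (φ _)]
    exact intervalIntegral.integral_const_mul _ _
  have normalizer := expand 1 continuous_const fun _ => by simp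
  simp only [Pi.one_apply, one_mul, intervalIntegral.integral_ofReal] at normalizer
  rw [expand _ (by fun_prop) fun x => by simp, normalizer, Complex.ofReal_tsum]
  simp only [Complex.ofReal_mul]
end

section
/- Correctness of the five-component deterministic approximation (Algorithm 2): let μ ∈ ℝ and m₁, m₂ ∈ (0,1). Let γ₅ ∈ (0,1), set γ₁ = γ₂ = γ₃ = γ₄ = (1 − γ₅)/4, c₁ = 2(m₁ − γ₅)/(1 − γ₅), c₂ = (m₂ − γ₅)/(1 − γ₅) + 1, and assume 2c₂ − c₁² ≥ 0. Define x₂ = (c₁ + √(2c₂ − c₁²))/2 and x₁ = c₁ − x₂, and assume x₁, x₂ ∈ [−1, 1]. With φ₁ = arccos(x₁), φ₂ = arccos(x₂) and component positions β₁ = μ − φ₁, β₂ = μ + φ₁, β₃ = μ − φ₂, β₄ = μ + φ₂, β₅ = μ, the wrapped Dirac mixture ∑_{j=1}^5 γ_j δ(x − β_j) has first circular moment ∑_{j=1}^5 γ_j exp(i β_j) = m₁ exp(i μ) and second circular moment ∑_{j=1}^5 γ_j exp(2 i β_j) = m₂ exp(2 i μ). -/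
open Complex in
lemma five_dirac_pair1 (a b : ℝ) :
    Complex.exp (Complex.I * ((a - b : ℝ) : ℂ)) + Complex.exp (Complex.I * ((a + b : ℝ) : ℂ)) =
      2 * Complex.cos (b : ℂ) * Complex.exp (Complex.I * (a : ℂ)) := by
  push_cast
  rw [mul_comm Complex.I ((a : ℂ) - b), mul_comm Complex.I ((a : ℂ) + b),
    mul_comm Complex.I (a : ℂ), Complex.exp_mul_I, Complex.exp_mul_I, Complex.exp_mul_I,
    Complex.cos_sub, Complex.cos_add, Complex.sin_sub, Complex.sin_add]
  ring

open Complex in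
lemma five_dirac_pair2 (a b : ℝ) :
    Complex.exp (2 * Complex.I * ((a - b : ℝ) : ℂ)) + Complex.exp (2 * Complex.I * ((a + b : ℝ) : ℂ)) =
      2 * Complex.cos (2 * (b : ℂ)) * Complex.exp (2 * Complex.I * (a : ℂ)) := by
  push_cast
  rw [show (2 : ℂ) * Complex.I * ((a : ℂ) - b) = ((2 * a : ℂ) - 2 * b) * Complex.I by ring,
    show (2 : ℂ) * Complex.I * ((a : ℂ) + b) = ((2 * a : ℂ) + 2 * b) * Complex.I by ring,
    show (2 : ℂ) * Complex.I * (a : ℂ) = (2 * a : ℂ) * Complex.I by ring,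
    Complex.exp_mul_I, Complex.exp_mul_I, Complex.exp_mul_I,
    Complex.cos_sub, Complex.cos_add, Complex.sin_sub, Complex.sin_add]
  ring

/-- Correctness of the five-component deterministic wrapped Dirac approximation:
it matches the prescribed first and second circular moments. -/
theorem five_dirac_moments (μ m₁ m₂ : ℝ)
    (hm₁ : m₁ ∈ Set.Ioo (0 : ℝ) 1) (hm₂ : m₂ ∈ Set.Ioo (0 : ℝ) 1)
    (γ₅ : ℝ) (hγ₅ : γ₅ ∈ Set.Ioo (0 : ℝ) 1)
    (γ c₁ c₂ x₁ x₂ φ₁ φ₂ : ℝ)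
    (hγ : γ = (1 - γ₅) / 4)
    (hc₁ : c₁ = 2 * (m₁ - γ₅) / (1 - γ₅))
    (hc₂ : c₂ = (m₂ - γ₅) / (1 - γ₅) + 1)
    (hdisc : 0 ≤ 2 * c₂ - c₁ ^ 2)
    (hx₂ : x₂ = (c₁ + Real.sqrt (2 * c₂ - c₁ ^ 2)) / 2)
    (hx₁ : x₁ = c₁ - x₂)
    (hx₁mem : x₁ ∈ Set.Icc (-1 : ℝ) 1) (hx₂mem : x₂ ∈ Set.Icc (-1 : ℝ) 1)
    (hφ₁ : φ₁ = Real.arccos x₁) (hφ₂ : φ₂ = Real.arccos x₂) :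
    ((γ : ℂ) * Complex.exp (Complex.I * ((μ - φ₁ : ℝ) : ℂ)) +
      (γ : ℂ) * Complex.exp (Complex.I * ((μ + φ₁ : ℝ) : ℂ)) +
      (γ : ℂ) * Complex.exp (Complex.I * ((μ - φ₂ : ℝ) : ℂ)) +
      (γ : ℂ) * Complex.exp (Complex.I * ((μ + φ₂ : ℝ) : ℂ)) +
      (γ₅ : ℂ) * Complex.exp (Complex.I * (μ : ℂ)) =
        (m₁ : ℂ) * Complex.exp (Complex.I * (μ : ℂ))) ∧
    ((γ : ℂ) * Complex.exp (2 * Complex.I * ((μ - φ₁ : ℝ) : ℂ)) +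
      (γ : ℂ) * Complex.exp (2 * Complex.I * ((μ + φ₁ : ℝ) : ℂ)) +
      (γ : ℂ) * Complex.exp (2 * Complex.I * ((μ - φ₂ : ℝ) : ℂ)) +
      (γ : ℂ) * Complex.exp (2 * Complex.I * ((μ + φ₂ : ℝ) : ℂ)) +
      (γ₅ : ℂ) * Complex.exp (2 * Complex.I * (μ : ℂ)) =
        (m₂ : ℂ) * Complex.exp (2 * Complex.I * (μ : ℂ))) := by
  have h5 : (1 : ℝ) - γ₅ ≠ 0 := by have := hγ₅.2; linarith
  have hcos1 : Real.cos φ₁ = x₁ := by rw [hφ₁]; exact Real.cos_arccos hx₁mem.1 hx₁mem.2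
  have hcos2 : Real.cos φ₂ = x₂ := by rw [hφ₂]; exact Real.cos_arccos hx₂mem.1 hx₂mem.2
  have hsq : Real.sqrt (2 * c₂ - c₁ ^ 2) ^ 2 = 2 * c₂ - c₁ ^ 2 := Real.sq_sqrt hdisc
  -- real moment identities
  have hr1 : 2 * γ * (Real.cos φ₁ + Real.cos φ₂) + γ₅ = m₁ := by
    rw [hcos1, hcos2, hx₁, hγ, hc₁]
    field_simp
    ring
  have hr2 : 2 * γ * (Real.cos (2 * φ₁) + Real.cos (2 * φ₂)) + γ₅ = m₂ := by
    rw [Real.cos_two_mul, Real.cos_two_mul, hcos1, hcos2, hx₁, hγ]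
    have hx : x₂ = (c₁ + Real.sqrt (2 * c₂ - c₁ ^ 2)) / 2 := hx₂
    rw [hx]
    rw [hc₂] at hsq ⊢
    field_simp at hsq ⊢
    nlinarith [hsq]
  have hc1 : ((2 * γ * (Real.cos φ₁ + Real.cos φ₂) + γ₅ : ℝ) : ℂ) = (m₁ : ℝ) := by
    exact_mod_cast congrArg (Complex.ofReal) hr1
  have hc2 : ((2 * γ * (Real.cos (2 * φ₁) + Real.cos (2 * φ₂)) + γ₅ : ℝ) : ℂ) = (m₂ : ℝ) := by
    exact_mod_cast congrArg (Complex.ofReal) hr2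
  push_cast at hc1 hc2
  constructor
  · linear_combination (γ : ℂ) * five_dirac_pair1 μ φ₁ + (γ : ℂ) * five_dirac_pair1 μ φ₂ +
      Complex.exp (Complex.I * (μ : ℂ)) * hc1
  · linear_combination (γ : ℂ) * five_dirac_pair2 μ φ₁ + (γ : ℂ) * five_dirac_pair2 μ φ₂ +
      Complex.exp (2 * Complex.I * (μ : ℂ)) * hc2
end

section
/- Validity of the progressive measurement-update step size: let γ₁, …, γ_L > 0 be weights and ℓ₁, …, ℓ_L > 0 be likelihood values with min_j ℓ_j < max_j ℓ_j, let R ∈ (0,1) satisfy R · (max_j γ_j)/(min_j γ_j) ≤ 1, and let λ > 0 satisfy λ ≤ log(R · (max_j γ_j)/(min_j γ_j)) / log((min_j ℓ_j)/(max_j ℓ_j)). Then the reweighted weights γ_j · ℓ_j^λ satisfy min_j (γ_j ℓ_j^λ) / max_j (γ_j ℓ_j^λ) ≥ R. -/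
/-!
The minimum and maximum of a product of positive families are bounded by the products of the
minima and maxima, so the reweighted ratio is at least `(min γ / max γ) · (min ℓ / max ℓ)^λ`.
Since `min ℓ / max ℓ < 1`, dividing the step-size bound by its negative logarithm turns it into
`log (R · max γ / min γ) ≤ λ · log (min ℓ / max ℓ)`, i.e. `R · max γ / min γ ≤ (min ℓ / max ℓ)^λ`.
-/

open Real

section FiniteFamily

variable {ι : Type*} [Finite ι] [Nonempty ι] {f g : ι → ℝ}

theorem ciInf_pos_of_pos (hf : ∀ j, 0 < f j) : 0 < ⨅ j, f j := by
  obtain ⟨i, hi⟩ := Finite.exists_min f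
  exact lt_of_lt_of_le (hf i) (le_ciInf hi)

theorem ciSup_pos_of_pos (hf : ∀ j, 0 < f j) : 0 < ⨆ j, f j :=
  (hf (Classical.arbitrary ι)).trans_le (le_ciSup (Finite.bddAbove_range f) _)

theorem ciInf_mul_ciInf_le_ciInf_mul_of_nonneg (hf : ∀ j, 0 ≤ f j) (hg : ∀ j, 0 ≤ g j) :
    (⨅ j, f j) * (⨅ j, g j) ≤ ⨅ j, f j * g j :=
  le_ciInf fun j => mul_le_mul (ciInf_le (Finite.bddBelow_range f) j)
    (ciInf_le (Finite.bddBelow_range g) j) (le_ciInf hg) (hf j)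

theorem ciSup_mul_le_ciSup_mul_ciSup_of_nonneg (hf : ∀ j, 0 ≤ f j) (hg : ∀ j, 0 ≤ g j) :
    ⨆ j, f j * g j ≤ (⨆ j, f j) * (⨆ j, g j) :=
  ciSup_le fun j => mul_le_mul (le_ciSup (Finite.bddAbove_range f) j)
    (le_ciSup (Finite.bddAbove_range g) j) (hg j)
    ((hf j).trans (le_ciSup (Finite.bddAbove_range f) j))

theorem ciInf_div_ciSup_mul_le (hf : ∀ j, 0 < f j) (hg : ∀ j, 0 < g j) :
    (⨅ j, f j) / (⨆ j, f j) * ((⨅ j, g j) / (⨆ j, g j)) ≤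
      (⨅ j, f j * g j) / (⨆ j, f j * g j) := by
  rw [div_mul_div_comm]
  gcongr
  · exact (ciInf_pos_of_pos fun j => mul_pos (hf j) (hg j)).le
  · exact ciSup_pos_of_pos fun j => mul_pos (hf j) (hg j)
  · exact ciInf_mul_ciInf_le_ciInf_mul_of_nonneg (fun j => (hf j).le) (fun j => (hg j).le)
  · exact ciSup_mul_le_ciSup_mul_ciSup_of_nonneg (fun j => (hf j).le) (fun j => (hg j).le)

theorem ciInf_div_ciSup_rpow_le (hf : ∀ j, 0 < f j) {p : ℝ} (hp : 0 ≤ p) :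
    ((⨅ j, f j) / (⨆ j, f j)) ^ p ≤ (⨅ j, f j ^ p) / (⨆ j, f j ^ p) := by
  have hinf := ciInf_pos_of_pos hf
  rw [div_rpow hinf.le (ciSup_pos_of_pos hf).le]
  gcongr
  · exact (ciInf_pos_of_pos fun j => rpow_pos_of_pos (hf j) p).le
  · exact ciSup_pos_of_pos fun j => rpow_pos_of_pos (hf j) p
  · exact le_ciInf fun j => rpow_le_rpow hinf.le (ciInf_le (Finite.bddBelow_range f) j) hp
  · exact ciSup_le fun j => rpow_le_rpow (hf j).le (le_ciSup (Finite.bddAbove_range f) j) hp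

end FiniteFamily

theorem progressive_step_size_valid_general {ι : Type*} [Fintype ι] [Nonempty ι]
    (γ ℓ : ι → ℝ) (hγ : ∀ j, 0 < γ j) (hℓ : ∀ j, 0 < ℓ j)
    (hℓne : (⨅ j, ℓ j) < ⨆ j, ℓ j)
    (R : ℝ)
    (lam : ℝ) (hlam0 : 0 < lam)
    (hlam : lam ≤ Real.log (R * (⨆ j, γ j) / (⨅ j, γ j)) /
      Real.log ((⨅ j, ℓ j) / (⨆ j, ℓ j))) :
    R ≤ (⨅ j, γ j * ℓ j ^ lam) / (⨆ j, γ j * ℓ j ^ lam) := by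
  have hγinf := ciInf_pos_of_pos hγ
  have hγsup := ciSup_pos_of_pos hγ
  have hℓratio : 0 < (⨅ j, ℓ j) / (⨆ j, ℓ j) :=
    div_pos (ciInf_pos_of_pos hℓ) (ciSup_pos_of_pos hℓ)
  have hlog_neg : log ((⨅ j, ℓ j) / (⨆ j, ℓ j)) < 0 :=
    log_neg hℓratio ((div_lt_one (ciSup_pos_of_pos hℓ)).mpr hℓne)
  have hγ_rpow : R * (⨆ j, γ j) / (⨅ j, γ j) ≤ ((⨅ j, ℓ j) / (⨆ j, ℓ j)) ^ lam :=
    le_rpow_of_log_le hℓratio ((le_div_iff_of_neg hlog_neg).mp hlam)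
  calc R ≤ (⨅ j, γ j) / (⨆ j, γ j) * ((⨅ j, ℓ j) / (⨆ j, ℓ j)) ^ lam := by
        rw [div_le_iff₀ hγinf] at hγ_rpow
        rwa [div_mul_eq_mul_div, le_div_iff₀ hγsup, mul_comm (⨅ j, γ j)]
    _ ≤ (⨅ j, γ j) / (⨆ j, γ j) * ((⨅ j, ℓ j ^ lam) / (⨆ j, ℓ j ^ lam)) := by
        gcongr
        exact ciInf_div_ciSup_rpow_le hℓ hlam0.le
    _ ≤ _ := ciInf_div_ciSup_mul_le hγ fun j => rpow_pos_of_pos (hℓ j) lam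

/-- Validity of the progressive measurement-update step size: if the step size `λ`
satisfies the bound from the progressive update, then the ratio of the smallest to the
largest reweighted weight stays above the threshold `R`. -/
theorem progressive_step_size_valid {ι : Type*} [Fintype ι] [Nonempty ι]
    (γ ℓ : ι → ℝ) (hγ : ∀ j, 0 < γ j) (hℓ : ∀ j, 0 < ℓ j)
    (hℓne : (⨅ j, ℓ j) < ⨆ j, ℓ j)
    (R : ℝ) (hR0 : 0 < R) (hR1 : R < 1)
    (hRbound : R * (⨆ j, γ j) / (⨅ j, γ j) ≤ 1)
    (lam : ℝ) (hlam0 : 0 < lam)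
    (hlam : lam ≤ Real.log (R * (⨆ j, γ j) / (⨅ j, γ j)) /
      Real.log ((⨅ j, ℓ j) / (⨆ j, ℓ j))) :
    R ≤ (⨅ j, γ j * ℓ j ^ lam) / (⨆ j, γ j * ℓ j ^ lam) :=
  progressive_step_size_valid_general γ ℓ hγ hℓ hℓne R lam hlam0 hlam
end
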